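/- arXiv:1906.00510 — 2 statements merged into one kernel-verified Lean document; each statement's English description precedes it below -/
import Mathlib

section
/- Let P ∈ F_q[t] be an irreducible polynomial of degree d ≥ 1 and e a positive integer. Define b_j = (q^{dj} − 1)/(q^d − 1) for j ∈ ℕ*. Write e uniquely as e = c₁ b_{j₁} + c₂ b_{j₂} + ⋯ + c_k b_{j_k} with j₁ > j₂ > ⋯ > j_k > 0, 1 ≤ c_i < q^d for i = 1, …, k−1, and 1 ≤ c_k ≤ q^d. Then S(P^e) = δ^{−1}(c₁ q^{d j₁} + c₂ q^{d j₂} + ⋯ + c_k q^{d j_k}), i.e. δ(S(P^e)) = c₁ q^{d j₁} + c₂ q^{d j₂} + ⋯ + c_k q^{d j_k}. -/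
open Polynomial

variable {F : Type*} [Field F] [Fintype F] [DecidableEq F]

/-- `delta a f` is the natural number attached to the polynomial `f` via the
enumeration `a : Fin q ≃ F` of the field (`q = Fintype.card F`): if
`f = a_{i_0} + a_{i_1} t + ⋯ + a_{i_n} t^n` then `delta a f = i_0 + i_1 q + ⋯ + i_n q^n`.
In particular `delta a 0 = 0` whenever `a 0 = 0`. -/
noncomputable def delta (a : Fin (Fintype.card F) ≃ F) (f : F[X]) : ℕ :=
  ∑ j ∈ Finset.range (f.natDegree + 1), (a.symm (f.coeff j) : ℕ) * Fintype.card F ^ j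

/-- The inverse of `delta`: the polynomial whose `j`-th coefficient is the `j`-th
base-`q` digit of `m` (under the enumeration `a`). -/
noncomputable def deltaInv (a : Fin (Fintype.card F) ≃ F) (m : ℕ) : F[X] :=
  ∑ j ∈ Finset.range (m + 1),
    C (a ⟨m / Fintype.card F ^ j % Fintype.card F, Nat.mod_lt _ Fintype.card_pos⟩) * X ^ j

/-- The factorial of a polynomial: `f! = ∏_{g < f} (f - g)`, the product over all
polynomials `g` with `delta a g < delta a f`; in particular `0! = 1`. -/
noncomputable def pfact (a : Fin (Fintype.card F) ≃ F) (f : F[X]) : F[X] :=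
  ∏ m ∈ Finset.range (delta a f), (f - deltaInv a m)

/-- The Smarandache function: `S a 0 = 0`, and for `f ≠ 0`, `S a f` is the smallest
polynomial `g` (in the order given by `delta`) such that `f ∣ g!`. -/
noncomputable def S (a : Fin (Fintype.card F) ≃ F) (f : F[X]) : F[X] :=
  if f = 0 then 0 else deltaInv a (sInf {m : ℕ | f ∣ pfact a (deltaInv a m)})


namespace SmarHelper
open Finset

def Wn (Q m : ℕ) : ℕ := ∑ i ∈ Finset.Ico 1 (m+1), m / Q^i
def nu (Q x : ℕ) : ℕ := ((Finset.Ico 1 (x+1)).filter (fun i => Q^i ∣ x)).card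
def bg (Q j : ℕ) : ℕ := ∑ l ∈ Finset.range j, Q^l

variable {Q : ℕ}

lemma lt_pow_of_le (hQ : 2 ≤ Q) {i m : ℕ} (h : m + 1 ≤ i) : m < Q^i :=
  lt_of_lt_of_le (Nat.lt_two_pow_self) (le_trans (Nat.pow_le_pow_right (by norm_num) (le_trans (Nat.le_succ m) h)) (Nat.pow_le_pow_left hQ i))

lemma Wn_eq (hQ : 2 ≤ Q) {m B : ℕ} (hB : m + 1 ≤ B) :
    ∑ i ∈ Finset.Ico 1 B, m / Q^i = Wn Q m := by
  unfold Wn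
  refine (Finset.sum_subset ?_ ?_).symm
  · exact Finset.Ico_subset_Ico le_rfl hB
  · intro i hi hni
    simp only [Finset.mem_Ico] at hi hni
    exact Nat.div_eq_of_lt (lt_pow_of_le hQ (by omega))

lemma Wn_mono (hQ : 2 ≤ Q) {m m' : ℕ} (h : m ≤ m') : Wn Q m ≤ Wn Q m' := by
  rw [← Wn_eq hQ (B := m' + 1) (by omega)]
  exact Finset.sum_le_sum fun i _ => Nat.div_le_div_right h

lemma Wn_succ (hQ : 2 ≤ Q) (m : ℕ) : Wn Q (m+1) = Wn Q m + nu Q (m+1) := by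
  unfold Wn nu
  have : ∀ i ∈ Finset.Ico 1 (m+1+1), (m+1) / Q^i = m / Q^i + if Q^i ∣ m+1 then 1 else 0 :=
    fun i _ => Nat.succ_div
  rw [Finset.sum_congr rfl this, Finset.sum_add_distrib, Wn_eq hQ (by omega)]
  congr 1
  rw [Finset.card_filter]

lemma Wn_zero : Wn Q 0 = 0 := by simp [Wn]

lemma bg_succ (a : ℕ) : bg Q (a+1) = Q * bg Q a + 1 := by
  unfold bg
  rw [Finset.sum_range_succ' (fun l => Q^l) a]
  simp [Finset.mul_sum, pow_succ, mul_comm]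

lemma Wn_add (hQ : 2 ≤ Q) {c y b : ℕ} (hc1 : 1 ≤ c) (hcQ : c < Q) (hy : y < Q^b) :
    Wn Q (c * Q^b + y) = c * bg Q b + Wn Q y := by
  set N := c * Q^b + y with hN
  have hbN : b + 1 ≤ N + 1 := by
    have h1 : b < Q^b := Nat.lt_pow_self (by omega)
    have h2 : Q^b ≤ c * Q^b := Nat.le_mul_of_pos_left _ hc1
    omega
  have hsplit : Finset.Ico 1 (N+1) = Finset.Ico 1 (b+1) ∪ Finset.Ico (b+1) (N+1) := by
    rw [Finset.Ico_union_Ico_eq_Ico (by omega) hbN]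
  have hdisj : Disjoint (Finset.Ico 1 (b+1)) (Finset.Ico (b+1) (N+1)) := by
    apply Finset.Ico_disjoint_Ico_consecutive
  have hNlt : N < Q^(b+1) := by
    have : c + 1 ≤ Q := hcQ
    calc N < c * Q^b + Q^b := by omega
    _ = (c+1) * Q^b := by ring
    _ ≤ Q * Q^b := Nat.mul_le_mul_right _ this
    _ = Q^(b+1) := by ring
  have hterm1 : ∀ i ∈ Finset.Ico 1 (b+1), N / Q^i = c * Q^(b-i) + y / Q^i := by
    intro i hi
    simp only [Finset.mem_Ico] at hi
    have hib : i ≤ b := by omega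
    have : c * Q^b = c * Q^(b-i) * Q^i := by
      rw [mul_assoc, ← pow_add]
      congr 2
      omega
    rw [hN, this, add_comm (c * Q^(b-i) * Q^i) y,
      Nat.add_mul_div_right _ _ (Nat.pow_pos (n := i) (by omega)), add_comm]
  have hterm2 : ∀ i ∈ Finset.Ico (b+1) (N+1), N / Q^i = 0 := by
    intro i hi
    simp only [Finset.mem_Ico] at hi
    exact Nat.div_eq_of_lt (lt_of_lt_of_le hNlt (Nat.pow_le_pow_right (by omega) hi.1))
  have hgeom : ∑ i ∈ Finset.Ico 1 (b+1), Q^(b-i) = bg Q b := by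
    rw [Finset.sum_Ico_eq_sum_range]
    simp only [Nat.add_sub_cancel]
    rw [← Finset.sum_range_reflect]
    apply Finset.sum_congr rfl
    intro l hl
    simp only [Finset.mem_range] at hl
    congr 1
    omega
  calc Wn Q N = ∑ i ∈ Finset.Ico 1 (b+1), N / Q^i + ∑ i ∈ Finset.Ico (b+1) (N+1), N / Q^i := by
        rw [Wn, hsplit, Finset.sum_union hdisj]
  _ = ∑ i ∈ Finset.Ico 1 (b+1), (c * Q^(b-i) + y / Q^i) + 0 := by
        rw [Finset.sum_congr rfl hterm1, Finset.sum_congr rfl hterm2, Finset.sum_const_zero]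
  _ = c * bg Q b + ∑ i ∈ Finset.Ico 1 (b+1), y / Q^i := by
        rw [Finset.sum_add_distrib, ← Finset.mul_sum, hgeom]
        ring
  _ = c * bg Q b + Wn Q y := by
        congr 1
        have h1 : ∑ i ∈ Finset.Ico 1 (N+1), y / Q^i = Wn Q y := Wn_eq hQ (by omega)
        rw [← h1, hsplit, Finset.sum_union hdisj]
        have : ∀ i ∈ Finset.Ico (b+1) (N+1), y / Q^i = 0 := by
          intro i hi
          simp only [Finset.mem_Ico] at hi
          exact Nat.div_eq_of_lt (lt_of_lt_of_le hy (Nat.pow_le_pow_right (by omega) (by omega)))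
        rw [Finset.sum_congr rfl this, Finset.sum_const_zero, add_zero]

lemma Wn_pow (hQ : 2 ≤ Q) (b : ℕ) : Wn Q (Q^b) = bg Q b := by
  have := Wn_add hQ (c := 1) (y := 0) (b := b) le_rfl (by omega) (Nat.pow_pos (n := b) (by omega))
  simpa [Wn_zero] using this

lemma Wn_mul_pow (hQ : 2 ≤ Q) {c b : ℕ} (hc1 : 1 ≤ c) (hcQ : c ≤ Q) :
    Wn Q (c * Q^b) = c * bg Q b + (if c = Q then 1 else 0) := by
  rcases lt_or_eq_of_le hcQ with h | h
  · have := Wn_add hQ (y := 0) hc1 h (Nat.pow_pos (n := b) (by omega))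
    simp only [add_zero] at this
    simp [this, Wn_zero, Nat.ne_of_lt h]
  · subst h
    rw [if_pos rfl]
    have h2 : c * c^b = c^(b+1) := by ring
    rw [h2, Wn_pow hQ, bg_succ]

lemma nu_le (hQ : 2 ≤ Q) {c y b : ℕ} (hy0 : 0 < y) (hy : y < Q^b) :
    nu Q y ≤ nu Q (c * Q^b + y) := by
  apply Finset.card_le_card
  intro i hi
  simp only [Finset.mem_filter, Finset.mem_Ico] at hi ⊢
  obtain ⟨⟨h1, h2⟩, hdvd⟩ := hi
  have hib : i < b := by
    have h3 : Q^i ≤ y := Nat.le_of_dvd hy0 hdvd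
    have : Q^i < Q^b := lt_of_le_of_lt h3 hy
    exact (Nat.pow_lt_pow_iff_right (by omega : 1 < Q)).mp this
  refine ⟨⟨h1, by omega⟩, ?_⟩
  exact Nat.dvd_add (Dvd.dvd.mul_left (pow_dvd_pow Q (le_of_lt hib)) c) hdvd

lemma nu_pow (hQ : 2 ≤ Q) (s : ℕ) : nu Q (Q^s) = s := by
  unfold nu
  have hfil : (Finset.Ico 1 (Q^s+1)).filter (fun i => Q^i ∣ Q^s) = Finset.Icc 1 s := by
    ext i
    simp only [Finset.mem_filter, Finset.mem_Ico, Finset.mem_Icc]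
    constructor
    · rintro ⟨⟨h1, _⟩, hdvd⟩
      exact ⟨h1, (Nat.pow_dvd_pow_iff_le_right (by omega)).mp hdvd⟩
    · rintro ⟨h1, h2⟩
      have hs : s < Q^s := Nat.lt_pow_self (by omega)
      exact ⟨⟨h1, by omega⟩, pow_dvd_pow Q h2⟩
  rw [hfil, Nat.card_Icc]
  omega

lemma nu_mul_pow (hQ : 2 ≤ Q) {c b : ℕ} (hc1 : 1 ≤ c) (hcQ : c ≤ Q) :
    nu Q (c * Q^b) = b + (if c = Q then 1 else 0) := by
  rcases lt_or_eq_of_le hcQ with h | h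
  · rw [if_neg (Nat.ne_of_lt h), add_zero]
    unfold nu
    have hb : b < Q^b := Nat.lt_pow_self (by omega)
    have hQb : Q^b ≤ c * Q^b := Nat.le_mul_of_pos_left _ hc1
    have hfil : (Finset.Ico 1 (c*Q^b+1)).filter (fun i => Q^i ∣ c*Q^b) = Finset.Icc 1 b := by
      ext i
      simp only [Finset.mem_filter, Finset.mem_Ico, Finset.mem_Icc]
      constructor
      · rintro ⟨⟨h1, _⟩, hdvd⟩
        refine ⟨h1, ?_⟩
        by_contra hib
        push_neg at hib
        have hd2 : Q^(b+1) ∣ c * Q^b := dvd_trans (pow_dvd_pow Q hib) hdvd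
        have : Q^b * Q ∣ Q^b * c := by
          rw [← pow_succ]
          rwa [mul_comm (Q^b) c]
        have hQc : Q ∣ c := (Nat.mul_dvd_mul_iff_left (Nat.pow_pos (n := b) (by omega))).mp this
        have := Nat.le_of_dvd (by omega) hQc
        omega
      · rintro ⟨h1, h2⟩
        exact ⟨⟨h1, by omega⟩, Dvd.dvd.mul_left (pow_dvd_pow Q h2) c⟩
    rw [hfil, Nat.card_Icc]
    omega
  · subst h
    rw [if_pos rfl]
    have h2 : c * c^b = c^(b+1) := by ring
    rw [h2, nu_pow hQ]

lemma single (hQ : 2 ≤ Q) {c b : ℕ} (hc1 : 1 ≤ c) (hcQ : c ≤ Q) :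
    c * bg Q b ≤ Wn Q (c * Q^b) ∧ Wn Q (c * Q^b) + b = c * bg Q b + nu Q (c * Q^b)
    ∧ c * Q^b ≤ Q^(b+1) ∧ 0 < c * Q^b := by
  rw [Wn_mul_pow hQ hc1 hcQ, nu_mul_pow hQ hc1 hcQ]
  have hp : 0 < Q^b := Nat.pow_pos (n := b) (by omega)
  refine ⟨by omega, by omega, ?_, by positivity⟩
  calc c * Q^b ≤ Q * Q^b := Nat.mul_le_mul_right _ hcQ
  _ = Q^(b+1) := by ring

lemma arith_main (hQ : 2 ≤ Q) : ∀ k, 0 < k → ∀ j c : ℕ → ℕ,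
    (∀ i, i+1 < k → j (i+1) < j i) →
    (∀ i, i+1 < k → 1 ≤ c i ∧ c i < Q) → (1 ≤ c (k-1) ∧ c (k-1) ≤ Q) →
    (∑ i ∈ Finset.range k, c i * bg Q (j i)) ≤ Wn Q (∑ i ∈ Finset.range k, c i * Q^(j i))
    ∧ Wn Q (∑ i ∈ Finset.range k, c i * Q^(j i)) + j (k-1)
        ≤ (∑ i ∈ Finset.range k, c i * bg Q (j i)) + nu Q (∑ i ∈ Finset.range k, c i * Q^(j i))
    ∧ (∑ i ∈ Finset.range k, c i * Q^(j i)) ≤ Q^(j 0 + 1)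
    ∧ 0 < (∑ i ∈ Finset.range k, c i * Q^(j i)) := by
  intro k
  induction k with
  | zero => omega
  | succ k IH =>
    intro _ j c hdec hmid hlast
    rcases Nat.eq_zero_or_pos k with hk0 | hkpos
    · subst hk0
      simp only [Finset.sum_range_succ, Finset.sum_range_zero, zero_add]
      obtain ⟨S1, S2, S3, S4⟩ := single (c := c 0) (b := j 0) hQ hlast.1 hlast.2
      exact ⟨S1, le_of_eq S2, S3, S4⟩
    · -- k ≥ 1, peel off index 0
      have hc0 : 1 ≤ c 0 ∧ c 0 < Q := hmid 0 (by omega)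
      set j' : ℕ → ℕ := fun i => j (i+1) with hj'
      set c' : ℕ → ℕ := fun i => c (i+1) with hc'
      have hlast' : 1 ≤ c' (k-1) ∧ c' (k-1) ≤ Q := by
        have hkx : k - 1 + 1 = k := by omega
        have hky : k + 1 - 1 = k := by omega
        simp only [hc', hkx]
        rw [hky] at hlast
        exact hlast
      obtain ⟨IH1, IH2, IH3, IH4⟩ := IH hkpos j' c'
        (fun i hi => hdec (i+1) (by omega))
        (fun i hi => hmid (i+1) (by omega)) hlast'
      set N' := ∑ i ∈ Finset.range k, c' i * Q^(j' i) with hN'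
      set E' := ∑ i ∈ Finset.range k, c' i * bg Q (j' i) with hE'
      have hsumN : ∑ i ∈ Finset.range (k+1), c i * Q^(j i) = c 0 * Q^(j 0) + N' := by
        rw [Finset.sum_range_succ' (fun i => c i * Q^(j i)) k, add_comm]
      have hsumE : ∑ i ∈ Finset.range (k+1), c i * bg Q (j i) = c 0 * bg Q (j 0) + E' := by
        rw [Finset.sum_range_succ' (fun i => c i * bg Q (j i)) k, add_comm]
      have hj10 : j 1 + 1 ≤ j 0 := hdec 0 (by omega)
      have hN'le : N' ≤ Q^(j 0) := by
        calc N' ≤ Q^(j' 0 + 1) := IH3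
        _ ≤ Q^(j 0) := Nat.pow_le_pow_right (by omega) (by simpa [hj'] using hj10)
      have hkk : j ((k+1) - 1) = j' (k - 1) := by
        simp only [hj']
        congr 1
        omega
      rw [hsumN, hsumE, hkk]
      rcases lt_or_eq_of_le hN'le with hlt | heq
      · -- main case, no carry into position j 0
        have hW : Wn Q (c 0 * Q^(j 0) + N') = c 0 * bg Q (j 0) + Wn Q N' :=
          Wn_add hQ hc0.1 hc0.2 hlt
        have hnu : nu Q N' ≤ nu Q (c 0 * Q^(j 0) + N') := nu_le hQ IH4 hlt
        have hub : c 0 * Q^(j 0) + N' ≤ Q^(j 0 + 1) := by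
          have h1 : c 0 + 1 ≤ Q := hc0.2
          have hp : 0 < Q^(j 0) := Nat.pow_pos (by omega)
          calc c 0 * Q^(j 0) + N' ≤ c 0 * Q^(j 0) + Q^(j 0) := by omega
          _ = (c 0 + 1) * Q^(j 0) := by ring
          _ ≤ Q * Q^(j 0) := Nat.mul_le_mul_right _ h1
          _ = Q^(j 0 + 1) := by ring
        have hpos : 0 < c 0 * Q^(j 0) + N' := by omega
        set G := c 0 * bg Q (j 0) with hG
        refine ⟨?_, ?_, hub, hpos⟩
        · rw [hW]; omega
        · rw [hW]; omega
      · -- carry case : N' = Q^(j 0)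
        rw [heq] at IH1 IH2 IH4 ⊢
        rw [Wn_pow hQ] at IH1 IH2
        rw [nu_pow hQ] at IH2
        have hNeq : c 0 * Q^(j 0) + Q^(j 0) = (c 0 + 1) * Q^(j 0) := by ring
        rw [hNeq]
        obtain ⟨S1, S2, S3, S4⟩ := single hQ (c := c 0 + 1) (b := j 0) (by omega) (by omega)
        have hmul : (c 0 + 1) * bg Q (j 0) = c 0 * bg Q (j 0) + bg Q (j 0) := by ring
        rw [hmul] at S1 S2
        set G := c 0 * bg Q (j 0) with hG
        set B := bg Q (j 0) with hB
        set X := Wn Q ((c 0 + 1) * Q^(j 0)) with hX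
        set Y := nu Q ((c 0 + 1) * Q^(j 0)) with hY
        exact ⟨by omega, by omega, S3, S4⟩

lemma digit_sum_mod {q : ℕ} (hq : 2 ≤ q) (B m : ℕ) :
    ∑ r ∈ Finset.range B, (m / q^r % q) * q^r = m % q^B := by
  induction B with
  | zero => simp [Nat.mod_one]
  | succ B ih =>
    rw [Finset.sum_range_succ, ih, pow_succ, Nat.mod_mul]
    ring

end SmarHelper

open Polynomial SmarHelper


section Poly

variable (a : Fin (Fintype.card F) ≃ F)

lemma hq2 : 2 ≤ Fintype.card F := Fintype.one_lt_card

lemma coeff_deltaInv (h0 : a 0 = 0) (m r : ℕ) :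
    (deltaInv a m).coeff r
      = a ⟨m / Fintype.card F ^ r % Fintype.card F, Nat.mod_lt _ Fintype.card_pos⟩ := by
  unfold deltaInv
  rw [finset_sum_coeff]
  simp only [coeff_C_mul, coeff_X_pow, mul_ite, mul_one, mul_zero]
  rw [Finset.sum_ite_eq (Finset.range (m+1))]
  by_cases hr : r ∈ Finset.range (m+1)
  · rw [if_pos hr]
  · rw [if_neg hr]
    simp only [Finset.mem_range] at hr
    have : m / Fintype.card F ^ r = 0 :=
      Nat.div_eq_of_lt (lt_pow_of_le (hq2 (F := F)) (by omega))
    rw [this]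
    have hfin : (⟨0 % Fintype.card F, Nat.mod_lt _ Fintype.card_pos⟩ :
        Fin (Fintype.card F)) = 0 := by
      apply Fin.ext
      simp
    rw [hfin, h0]

lemma natDegree_deltaInv_le (m : ℕ) : (deltaInv a m).natDegree ≤ m := by
  unfold deltaInv
  apply natDegree_sum_le_of_forall_le
  intro i hi
  simp only [Finset.mem_range] at hi
  exact le_trans (natDegree_C_mul_X_pow_le _ _) (by omega)

lemma delta_deltaInv (h0 : a 0 = 0) (m : ℕ) : delta a (deltaInv a m) = m := by
  unfold delta
  set f := deltaInv a m with hf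
  have hcoeff := coeff_deltaInv a h0 m
  have hnd : f.natDegree ≤ m := natDegree_deltaInv_le a m
  have hext : ∑ r ∈ Finset.range (f.natDegree + 1), (a.symm (f.coeff r) : ℕ) * Fintype.card F ^ r
      = ∑ r ∈ Finset.range (m + 1), (a.symm (f.coeff r) : ℕ) * Fintype.card F ^ r := by
    apply Finset.sum_subset
    · exact Finset.range_subset_range.mpr (by omega)
    · intro r hr hnr
      simp only [Finset.mem_range] at hr hnr
      have : f.coeff r = 0 := coeff_eq_zero_of_natDegree_lt (by omega)
      rw [this, ← h0, Equiv.symm_apply_apply]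
      simp
  rw [hext]
  have : ∀ r ∈ Finset.range (m+1), (a.symm (f.coeff r) : ℕ) * Fintype.card F ^ r
      = (m / Fintype.card F ^ r % Fintype.card F) * Fintype.card F ^ r := by
    intro r _
    rw [hcoeff r, Equiv.symm_apply_apply]
  rw [Finset.sum_congr rfl this, digit_sum_mod (hq2 (F := F))]
  exact Nat.mod_eq_of_lt (lt_pow_of_le (hq2 (F := F)) le_rfl)

lemma deltaInv_injective (h0 : a 0 = 0) : Function.Injective (deltaInv a) := by
  intro m m' h
  have := delta_deltaInv a h0 m
  rw [h, delta_deltaInv a h0 m'] at this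
  exact this.symm

lemma coeff_sub_high (h0 : a 0 = 0) {m m' D : ℕ}
    (h : m / Fintype.card F ^ D = m' / Fintype.card F ^ D) {r : ℕ} (hr : D ≤ r) :
    (deltaInv a m - deltaInv a m').coeff r = 0 := by
  rw [coeff_sub, coeff_deltaInv a h0, coeff_deltaInv a h0]
  have hdig : m / Fintype.card F ^ r = m' / Fintype.card F ^ r := by
    have hpow : Fintype.card F ^ D * Fintype.card F ^ (r - D) = Fintype.card F ^ r := by
      rw [← pow_add]; congr 1; omega
    rw [← hpow, ← Nat.div_div_eq_div_mul, ← Nat.div_div_eq_div_mul, h]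
  simp_rw [hdig]
  exact sub_self _

lemma not_dvd_of_high_eq (h0 : a 0 = 0) {P : F[X]} (hP : Irreducible P) {d : ℕ}
    (hd : P.natDegree = d) (hd1 : 1 ≤ d) {i : ℕ} (hi : 1 ≤ i) {m m' : ℕ} (hne : m ≠ m')
    (h : m / Fintype.card F ^ (d*i) = m' / Fintype.card F ^ (d*i)) :
    ¬ P^i ∣ (deltaInv a m - deltaInv a m') := by
  intro hdvd
  set g := deltaInv a m - deltaInv a m' with hg
  have hgne : g ≠ 0 := by
    intro hz
    exact hne (deltaInv_injective a h0 (by rwa [sub_eq_zero] at hz))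
  have hdeg : g.natDegree < d * i := by
    rw [natDegree_lt_iff_degree_lt hgne]
    rw [degree_lt_iff_coeff_zero]
    intro r hr
    have : d * i ≤ r := by exact_mod_cast hr
    exact coeff_sub_high a h0 h this
  have hle : (P^i).natDegree ≤ g.natDegree := natDegree_le_of_dvd hdvd hgne
  rw [natDegree_pow, hd, mul_comm] at hle
  exact lt_irrefl _ (lt_of_le_of_lt hle hdeg)

lemma exists_block (h0 : a 0 = 0) {P : F[X]} (hP : Irreducible P) {d : ℕ}
    (hd : P.natDegree = d) (hd1 : 1 ≤ d) {i : ℕ} (hi : 1 ≤ i) (f : F[X]) (r : ℕ) :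
    ∃ u, u < Fintype.card F ^ (d*i) ∧
      P^i ∣ f - deltaInv a (r * Fintype.card F ^ (d*i) + u) := by
  classical
  set D := d * i with hD
  have hPne : P ≠ 0 := hP.ne_zero
  set M := (normalize P)^i with hM
  have hMmonic : M.Monic := (monic_normalize hPne).pow i
  have hMne : M ≠ 0 := hMmonic.ne_zero
  have hnPdeg : (normalize P).natDegree = d := by
    rw [← hd]
    exact natDegree_eq_of_degree_eq degree_normalize
  have hMdeg : M.natDegree = D := by
    rw [hM, natDegree_pow, hnPdeg, mul_comm]
  have hassoc : Associated M (P^i) := by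
    rw [hM]
    exact ((associated_normalize P).pow_pow).symm
  have hMdvd : ∀ x : F[X], M ∣ x ↔ P^i ∣ x := fun x => hassoc.dvd_iff_dvd_left
  have hdegmod : ∀ g : F[X], (g %ₘ M) ∈ degreeLT F D := by
    intro g
    rw [mem_degreeLT]
    refine lt_of_lt_of_le (degree_modByMonic_lt g hMmonic) ?_
    rw [degree_eq_natDegree hMne, hMdeg]
  set φ : Fin (Fintype.card F ^D) → (Fin D → F) := fun u =>
    degreeLTEquiv F D ⟨(f - deltaInv a (r * Fintype.card F ^D + u)) %ₘ M, hdegmod _⟩ with hφ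
  have hinj : Function.Injective φ := by
    intro u u' huu
    simp only [hφ] at huu
    have h2 := (degreeLTEquiv F D).injective huu
    have h3 : (f - deltaInv a (r * Fintype.card F ^D + u)) %ₘ M
        = (f - deltaInv a (r * Fintype.card F ^D + u')) %ₘ M := congrArg Subtype.val h2
    by_contra hne
    have hval : (u : ℕ) ≠ (u' : ℕ) := fun h => hne (Fin.ext h)
    have hdiff : M ∣ (deltaInv a (r * Fintype.card F ^D + u') - deltaInv a (r * Fintype.card F ^D + u)) := by
      rw [← modByMonic_eq_zero_iff_dvd hMmonic, sub_modByMonic]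
      have : deltaInv a (r * Fintype.card F ^D + u') - deltaInv a (r * Fintype.card F ^D + u)
          = (f - deltaInv a (r * Fintype.card F ^D + u)) - (f - deltaInv a (r * Fintype.card F ^D + u')) := by ring
      rw [show (deltaInv a (r * Fintype.card F ^D + u')) %ₘ M - (deltaInv a (r * Fintype.card F ^D + u)) %ₘ M
          = ((deltaInv a (r * Fintype.card F ^D + u')) - (deltaInv a (r * Fintype.card F ^D + u))) %ₘ M from
          (sub_modByMonic _ _ _).symm] at *
      rw [this, sub_modByMonic, h3, sub_self]
    rw [hMdvd] at hdiff
    have hpos : 0 < Fintype.card F ^D := Nat.pow_pos (n := D) (by have := hq2 (F := F); omega)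
    have hdivq : ∀ v : Fin (Fintype.card F ^D), (r * Fintype.card F ^D + (v:ℕ)) / Fintype.card F ^D = r := by
      intro v
      rw [add_comm, Nat.add_mul_div_right _ _ hpos, Nat.div_eq_of_lt v.isLt, zero_add]
    have hne2 : r * Fintype.card F ^D + (u':ℕ) ≠ r * Fintype.card F ^D + (u:ℕ) := by
      intro h
      exact hval (by omega)
    exact not_dvd_of_high_eq a h0 hP hd hd1 hi hne2 (by rw [hdivq u', hdivq u]) hdiff
  have hcard : Fintype.card (Fin (Fintype.card F ^D)) = Fintype.card (Fin D → F) := by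
    rw [Fintype.card_fin, Fintype.card_fun, Fintype.card_fin]
  have hbij : Function.Bijective φ :=
    (Fintype.bijective_iff_injective_and_card φ).mpr ⟨hinj, hcard⟩
  obtain ⟨u, hu⟩ := hbij.surjective 0
  refine ⟨u.val, u.isLt, ?_⟩
  have hzero : (⟨(f - deltaInv a (r * Fintype.card F ^D + u)) %ₘ M, hdegmod _⟩ :
      degreeLT F D) = 0 := by
    exact (LinearEquiv.map_eq_zero_iff _).mp hu
  have hmod0 : (f - deltaInv a (r * Fintype.card F ^D + u)) %ₘ M = 0 := congrArg Subtype.val hzero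
  rw [← hMdvd]
  exact (modByMonic_eq_zero_iff_dvd hMmonic).mp hmod0


open scoped Classical in
lemma count_block (h0 : a 0 = 0) {P : F[X]} (hP : Irreducible P) {d : ℕ}
    (hd : P.natDegree = d) (hd1 : 1 ≤ d) {i : ℕ} (hi : 1 ≤ i) (n : ℕ) :
    ((Finset.range n).filter
      (fun m => P^i ∣ deltaInv a n - deltaInv a m)).card = n / Fintype.card F ^ (d*i) := by
  have hq : 2 ≤ Fintype.card F := hq2 (F := F)
  have hQ' : 0 < Fintype.card F ^ (d*i) := Nat.pow_pos (by omega)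
  rw [show n / Fintype.card F ^ (d*i)
      = (Finset.range (n / Fintype.card F ^ (d*i))).card from (Finset.card_range _).symm]
  apply Finset.card_bij (fun m _ => m / Fintype.card F ^ (d*i))
  · intro m hm
    simp only [Finset.mem_filter, Finset.mem_range] at hm
    rw [Finset.mem_range]
    have hle : m / Fintype.card F ^ (d*i) ≤ n / Fintype.card F ^ (d*i) :=
      Nat.div_le_div_right (le_of_lt hm.1)
    rcases lt_or_eq_of_le hle with h | h
    · exact h
    · exfalso
      exact not_dvd_of_high_eq a h0 hP hd hd1 hi (by omega : n ≠ m) h.symm hm.2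
  · intro m1 hm1 m2 hm2 heq
    simp only [Finset.mem_filter, Finset.mem_range] at hm1 hm2
    by_contra hne
    have hdvd : P^i ∣ deltaInv a m2 - deltaInv a m1 := by
      have : deltaInv a m2 - deltaInv a m1
          = (deltaInv a n - deltaInv a m1) - (deltaInv a n - deltaInv a m2) := by ring
      rw [this]
      exact dvd_sub hm1.2 hm2.2
    exact not_dvd_of_high_eq a h0 hP hd hd1 hi (Ne.symm hne) (by rw [heq]) hdvd
  · intro r hr
    rw [Finset.mem_range] at hr
    obtain ⟨u, hu, hdvd⟩ := exists_block a h0 hP hd hd1 hi (deltaInv a n) r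
    have hmem : r * Fintype.card F ^ (d*i) + u < n := by
      have h1 : r + 1 ≤ n / Fintype.card F ^ (d*i) := hr
      have h2 : (r+1) * Fintype.card F ^ (d*i) ≤ (n / Fintype.card F ^ (d*i)) * Fintype.card F ^ (d*i) :=
        Nat.mul_le_mul_right _ h1
      have h3 : (n / Fintype.card F ^ (d*i)) * Fintype.card F ^ (d*i) ≤ n := Nat.div_mul_le_self n _
      have h4 : r * Fintype.card F ^ (d*i) + u < (r+1) * Fintype.card F ^ (d*i) := by
        have : (r+1) * Fintype.card F ^ (d*i) = r * Fintype.card F ^ (d*i) + Fintype.card F ^ (d*i) := by ring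
        omega
      omega
    refine ⟨r * Fintype.card F ^ (d*i) + u, ?_, ?_⟩
    · simp only [Finset.mem_filter, Finset.mem_range]
      exact ⟨hmem, hdvd⟩
    · rw [add_comm, Nat.add_mul_div_right _ _ hQ', Nat.div_eq_of_lt hu, zero_add]

open scoped Classical in
lemma emult_eq_card {P : F[X]} (hpr : Prime P) {d : ℕ} (hd : P.natDegree = d)
    (hd1 : 1 ≤ d) {x : F[X]} (hx : x ≠ 0) {n : ℕ} (hnd : x.natDegree ≤ n) :
    emultiplicity P x
      = (((Finset.Ico 1 (n+1)).filter (fun i => P^i ∣ x)).card : ℕ∞) := by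
  have hfin : FiniteMultiplicity P x := FiniteMultiplicity.of_prime_left hpr hx
  have hvn : multiplicity P x ≤ n := by
    have hdvd : P ^ (multiplicity P x) ∣ x := pow_multiplicity_dvd P x
    have h2 := natDegree_le_of_dvd hdvd hx
    rw [natDegree_pow, hd] at h2
    have h3 : multiplicity P x ≤ multiplicity P x * d :=
      Nat.le_mul_of_pos_right _ (by omega)
    omega
  have hfil : (Finset.Ico 1 (n+1)).filter (fun i => P^i ∣ x)
      = Finset.Icc 1 (multiplicity P x) := by
    ext i
    simp only [Finset.mem_filter, Finset.mem_Ico, Finset.mem_Icc]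
    constructor
    · rintro ⟨⟨h1, _⟩, hdvd⟩
      exact ⟨h1, hfin.le_multiplicity_of_pow_dvd hdvd⟩
    · rintro ⟨h1, h2⟩
      exact ⟨⟨h1, by omega⟩, hfin.pow_dvd_iff_le_multiplicity.mpr h2⟩
  rw [hfil, Nat.card_Icc, hfin.emultiplicity_eq_multiplicity]
  norm_num

open scoped Classical in
lemma dvd_pfact_iff (h0 : a 0 = 0) {P : F[X]} (hP : Irreducible P) {d : ℕ}
    (hd : P.natDegree = d) (hd1 : 1 ≤ d) (E n : ℕ) :
    P^E ∣ pfact a (deltaInv a n) ↔ E ≤ Wn (Fintype.card F ^ d) n := by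
  have hpr : Prime P := hP.prime
  have hpf : pfact a (deltaInv a n)
      = ∏ m ∈ Finset.range n, (deltaInv a n - deltaInv a m) := by
    unfold pfact
    rw [delta_deltaInv a h0]
  rw [hpf, pow_dvd_iff_le_emultiplicity, Finset.emultiplicity_prod hpr]
  have hterm : ∀ m ∈ Finset.range n, emultiplicity P (deltaInv a n - deltaInv a m)
      = (((Finset.Ico 1 (n+1)).filter
          (fun i => P^i ∣ (deltaInv a n - deltaInv a m))).card : ℕ∞) := by
    intro m hm
    rw [Finset.mem_range] at hm
    have hne : deltaInv a n - deltaInv a m ≠ 0 := by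
      rw [sub_ne_zero]
      intro h
      exact absurd (deltaInv_injective a h0 h) (by omega)
    have hnd : (deltaInv a n - deltaInv a m).natDegree ≤ n := by
      refine le_trans (natDegree_sub_le _ _) ?_
      have h1 := natDegree_deltaInv_le a n
      have h2 := natDegree_deltaInv_le a m
      omega
    exact emult_eq_card hpr hd hd1 hne hnd
  rw [Finset.sum_congr rfl hterm, ← Nat.cast_sum]
  have hswap : ∑ m ∈ Finset.range n,
        ((Finset.Ico 1 (n+1)).filter (fun i => P^i ∣ (deltaInv a n - deltaInv a m))).card
      = ∑ i ∈ Finset.Ico 1 (n+1),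
        ((Finset.range n).filter (fun m => P^i ∣ (deltaInv a n - deltaInv a m))).card := by
    simp_rw [Finset.card_filter]
    rw [Finset.sum_comm]
  rw [hswap]
  have hcount : ∀ i ∈ Finset.Ico 1 (n+1),
      ((Finset.range n).filter (fun m => P^i ∣ (deltaInv a n - deltaInv a m))).card
        = n / (Fintype.card F ^ d)^i := by
    intro i hi
    simp only [Finset.mem_Ico] at hi
    rw [count_block a h0 hP hd hd1 hi.1 n, ← pow_mul]
  rw [Finset.sum_congr rfl hcount]
  have : ∑ i ∈ Finset.Ico 1 (n+1), n / (Fintype.card F ^ d)^i = Wn (Fintype.card F ^ d) n := rfl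
  rw [this]
  exact Nat.cast_le

end Poly

namespace SmarHelper

lemma bg_mul (hQ : 2 ≤ Q) (t : ℕ) : (Q - 1) * bg Q t + 1 = Q^t := by
  obtain ⟨R, rfl⟩ : ∃ R, Q = R + 1 := ⟨Q - 1, by omega⟩
  simp only [Nat.add_sub_cancel]
  induction t with
  | zero => simp [bg]
  | succ t ih =>
    rw [bg_succ, pow_succ]
    ring_nf
    ring_nf at ih
    rw [mul_comm] at ih ⊢
    nlinarith [ih]

lemma bg_div (hQ : 2 ≤ Q) (t : ℕ) : (Q^t - 1) / (Q - 1) = bg Q t := by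
  have h := bg_mul hQ t
  have h2 : Q^t - 1 = (Q - 1) * bg Q t := by omega
  rw [h2, Nat.mul_div_cancel_left _ (by omega : 0 < Q - 1)]

end SmarHelper



/-- Proposition 3.4: let `P` be irreducible of degree `d ≥ 1`, `e ≥ 1`, and
`b_j = (q^{dj} - 1)/(q^d - 1)`.  If `e = c₁ b_{j₁} + ⋯ + c_k b_{j_k}` with
`j₁ > ⋯ > j_k > 0`, `1 ≤ cᵢ < q^d` for `i < k` and `1 ≤ c_k ≤ q^d`, then
`S(P^e) = δ⁻¹(c₁ q^{d j₁} + ⋯ + c_k q^{d j_k})`. -/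
theorem smarandache_prime_pow (a : Fin (Fintype.card F) ≃ F) (h0 : a 0 = 0) (h1 : a 1 = 1)
    (P : F[X]) (hP : Irreducible P) (d : ℕ) (hd : P.natDegree = d) (hd1 : 1 ≤ d)
    (e : ℕ) (he : 0 < e) (k : ℕ) (hk : 0 < k) (j c : Fin k → ℕ)
    (hj : StrictAnti j) (hjpos : ∀ i, 0 < j i)
    (hc : ∀ i : Fin k, (i : ℕ) + 1 < k → 1 ≤ c i ∧ c i < Fintype.card F ^ d)
    (hck : ∀ i : Fin k, (i : ℕ) + 1 = k → 1 ≤ c i ∧ c i ≤ Fintype.card F ^ d)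
    (hrep : e = ∑ i, c i * ((Fintype.card F ^ (d * j i) - 1) / (Fintype.card F ^ d - 1))) :
    delta a (S a (P ^ e)) = ∑ i, c i * Fintype.card F ^ (d * j i) := by
  classical
  have hq : 2 ≤ Fintype.card F := hq2 (F := F)
  have hQ : 2 ≤ Fintype.card F ^ d :=
    le_trans hq (Nat.le_self_pow (by omega) _)
  set j' : ℕ → ℕ := fun i => if h : i < k then j ⟨i, h⟩ else 0 with hj'def
  set c' : ℕ → ℕ := fun i => if h : i < k then c ⟨i, h⟩ else 0 with hc'def
  have hj'eq : ∀ i : Fin k, j' i = j i := by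
    intro i
    simp only [hj'def, i.isLt, dif_pos]
  have hc'eq : ∀ i : Fin k, c' i = c i := by
    intro i
    simp only [hc'def, i.isLt, dif_pos]
  have hsum1 : ∑ i : Fin k, c i * Fintype.card F ^ (d * j i)
      = ∑ i ∈ Finset.range k, c' i * (Fintype.card F ^ d)^(j' i) := by
    rw [← Fin.sum_univ_eq_sum_range (fun i => c' i * (Fintype.card F ^ d)^(j' i)) k]
    apply Finset.sum_congr rfl
    intro i _
    rw [hj'eq i, hc'eq i, ← pow_mul]
  have hsum2 : e = ∑ i ∈ Finset.range k, c' i * SmarHelper.bg (Fintype.card F ^ d) (j' i) := by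
    rw [hrep, ← Fin.sum_univ_eq_sum_range
      (fun i => c' i * SmarHelper.bg (Fintype.card F ^ d) (j' i)) k]
    apply Finset.sum_congr rfl
    intro i _
    rw [hj'eq i, hc'eq i, ← SmarHelper.bg_div hQ (j i), ← pow_mul]
  have hdec' : ∀ i, i + 1 < k → j' (i+1) < j' i := by
    intro i hik
    have h1 : i < k := by omega
    simp only [hj'def, dif_pos hik, dif_pos h1]
    apply hj
    rw [Fin.lt_def]
    simp
  have hmid' : ∀ i, i + 1 < k → 1 ≤ c' i ∧ c' i < Fintype.card F ^ d := by
    intro i hik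
    have h1 : i < k := by omega
    simp only [hc'def, dif_pos h1]
    exact hc ⟨i, h1⟩ hik
  have hlast' : 1 ≤ c' (k-1) ∧ c' (k-1) ≤ Fintype.card F ^ d := by
    have h1 : k - 1 < k := by omega
    simp only [hc'def, dif_pos h1]
    exact hck ⟨k-1, h1⟩ (by simp; omega)
  obtain ⟨A1, A2, A3, A4⟩ :=
    SmarHelper.arith_main hQ k hk j' c' hdec' hmid' hlast'
  set N := ∑ i ∈ Finset.range k, c' i * (Fintype.card F ^ d)^(j' i) with hN
  set E := ∑ i ∈ Finset.range k, c' i * SmarHelper.bg (Fintype.card F ^ d) (j' i) with hE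
  have hjlast : 1 ≤ j' (k-1) := by
    have h1 : k - 1 < k := by omega
    simp only [hj'def, dif_pos h1]
    exact hjpos ⟨k-1, h1⟩
  have hWsucc : SmarHelper.Wn (Fintype.card F ^ d) N
      = SmarHelper.Wn (Fintype.card F ^ d) (N-1) + SmarHelper.nu (Fintype.card F ^ d) N := by
    have h2 := SmarHelper.Wn_succ hQ (N - 1)
    rw [show N - 1 + 1 = N by omega] at h2
    exact h2
  have hlt : ∀ m, m < N → SmarHelper.Wn (Fintype.card F ^ d) m < e := by
    intro m hm
    have h1 : SmarHelper.Wn (Fintype.card F ^ d) m ≤ SmarHelper.Wn (Fintype.card F ^ d) (N-1) :=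
      SmarHelper.Wn_mono hQ (by omega)
    rw [hsum2]
    omega
  have hge : e ≤ SmarHelper.Wn (Fintype.card F ^ d) N := by
    rw [hsum2]
    exact A1
  have hPne : P ^ e ≠ 0 := pow_ne_zero e hP.ne_zero
  unfold S
  rw [if_neg hPne, delta_deltaInv a h0]
  have hsetEq : {m : ℕ | P^e ∣ pfact a (deltaInv a m)}
      = {m : ℕ | e ≤ SmarHelper.Wn (Fintype.card F ^ d) m} := by
    ext m
    exact dvd_pfact_iff a h0 hP hd hd1 e m
  rw [hsetEq, hsum1]
  have hmem : N ∈ {m : ℕ | e ≤ SmarHelper.Wn (Fintype.card F ^ d) m} := hge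
  apply le_antisymm (Nat.sInf_le hmem)
  by_contra hcon
  push_neg at hcon
  have hinf := Nat.sInf_mem (Set.nonempty_of_mem hmem)
  have := hlt _ hcon
  exact absurd hinf (by simp only [Set.mem_setOf_eq]; omega)
end

section
/- Let f ∈ tA be a nonzero polynomial and d a positive integer with q^d dividing δ(f). Write δ(f) uniquely as δ(f) = c₁ q^{d j₁} + c₂ q^{d j₂} + ⋯ + c_k q^{d j_k} with j₁ > j₂ > ⋯ > j_k > 0 and 1 ≤ c_i < q^d for all i. Put b_j = (q^{dj} − 1)/(q^d − 1) and e₀ = c₁ b_{j₁} + c₂ b_{j₂} + ⋯ + c_k b_{j_k}. Then for every irreducible polynomial P ∈ A of degree d and every integer e with e₀ − (j_k − 1) ≤ e ≤ e₀, one has S(P^e) = f; i.e. S^{−1}(f) contains the set { P^e : P ∈ A irreducible of degree d, e ∈ [e₀ − (j_k − 1), e₀] ∩ ℕ }. -/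
open Polynomial

variable {F : Type*} [Field F] [Fintype F] [DecidableEq F]

namespace SmarandacheAux
/-- geometric sum identity in ℕ -/
lemma geom_mul (Q t : ℕ) (hQ : 1 ≤ Q) :
    (∑ s ∈ Finset.range t, Q ^ s) * (Q - 1) = Q ^ t - 1 := by
  induction t with
  | zero => simp
  | succ t ih =>
    rw [Finset.sum_range_succ, add_mul, ih, pow_succ]
    have h1 : 1 ≤ Q ^ t := Nat.one_le_pow _ _ hQ
    have h2 : Q ^ t ≤ Q ^ t * Q := Nat.le_mul_of_pos_right _ hQ
    have h3 : Q ^ t * (Q - 1) = Q ^ t * Q - Q ^ t := by rw [Nat.mul_sub, mul_one]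
    omega

lemma geom_div {Q : ℕ} (hQ : 2 ≤ Q) (t : ℕ) :
    (Q ^ t - 1) / (Q - 1) = ∑ s ∈ Finset.range t, Q ^ s := by
  rw [← geom_mul Q t (by omega)]
  exact Nat.mul_div_cancel _ (by omega)

lemma geom_lt {Q : ℕ} (hQ : 1 ≤ Q) {C : ℕ → ℕ} (hC : ∀ t, C t < Q) (N : ℕ) :
    ∑ t ∈ Finset.range N, C t * Q ^ t < Q ^ N := by
  have h1 : ∑ t ∈ Finset.range N, C t * Q ^ t ≤ ∑ t ∈ Finset.range N, (Q - 1) * Q ^ t := by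
    apply Finset.sum_le_sum
    intro i _
    exact Nat.mul_le_mul_right _ (by have := hC i; omega)
  have h2 : ∑ t ∈ Finset.range N, (Q - 1) * Q ^ t = Q ^ N - 1 := by
    rw [← geom_mul Q N hQ, Finset.sum_mul]
    simp [mul_comm]
  have h3 : 1 ≤ Q ^ N := Nat.one_le_pow _ _ hQ
  omega

/-- digit reconstruction: if `m < q^B` then the base-`q` digits of `m` reassemble to `m`. -/
lemma digits_reconstruct {q : ℕ} (hq : 2 ≤ q) :
    ∀ B m, m < q ^ B → ∑ j ∈ Finset.range B, (m / q ^ j % q) * q ^ j = m := by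
  intro B
  induction B with
  | zero => intro m hm; simp at hm ⊢; omega
  | succ B ih =>
    intro m hm
    rw [Finset.sum_range_succ']
    have key : ∀ j, m / q ^ (j + 1) % q * q ^ (j + 1) = (m / q / q ^ j % q * q ^ j) * q := by
      intro j
      rw [pow_succ']
      rw [← Nat.div_div_eq_div_mul]
      ring
    calc ∑ j ∈ Finset.range B, m / q ^ (j+1) % q * q ^ (j+1) + m / q ^ 0 % q * q ^ 0
        = (∑ j ∈ Finset.range B, (m / q) / q ^ j % q * q ^ j) * q + m % q := by
          rw [Finset.sum_congr rfl fun j _ => key j, ← Finset.sum_mul]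
          simp
      _ = (m / q) * q + m % q := by
          rw [ih (m / q) (by
            rw [Nat.div_lt_iff_lt_mul (by omega)]
            calc m < q ^ (B+1) := hm
              _ = q ^ B * q := by rw [pow_succ])]
      _ = m := by rw [mul_comm]; exact Nat.div_add_mod m q

/-- digit extraction: digits of a digit expansion are the digits. -/
lemma digits_extract {q : ℕ} (hq : 2 ≤ q) :
    ∀ (J B : ℕ) (i : ℕ → ℕ), (∀ j, i j < q) → J < B →
      (∑ j ∈ Finset.range B, i j * q ^ j) / q ^ J % q = i J := by
  intro J
  induction J with
  | zero =>
    intro B i hi hJB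
    obtain ⟨B', rfl⟩ : ∃ B', B = B' + 1 := ⟨B - 1, by omega⟩
    rw [Finset.sum_range_succ']
    simp only [pow_zero, Nat.div_one, mul_one]
    have key : ∀ j, i (j + 1) * q ^ (j + 1) = (i (j+1) * q ^ j) * q := by
      intro j; rw [pow_succ]; ring
    rw [Finset.sum_congr rfl fun j _ => key j, ← Finset.sum_mul]
    rw [Nat.mul_add_mod']
    exact Nat.mod_eq_of_lt (hi 0)
  | succ J ih =>
    intro B i hi hJB
    obtain ⟨B', rfl⟩ : ∃ B', B = B' + 1 := ⟨B - 1, by omega⟩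
    rw [Finset.sum_range_succ']
    have key : ∀ j, i (j + 1) * q ^ (j + 1) = (i (j+1) * q ^ j) * q := by
      intro j; rw [pow_succ]; ring
    rw [Finset.sum_congr rfl fun j _ => key j, ← Finset.sum_mul]
    have h2 : q ^ (J + 1) = q * q ^ J := by rw [pow_succ']
    rw [h2, ← Nat.div_div_eq_div_mul]
    have h3 : ((∑ j ∈ Finset.range B', i (j+1) * q ^ j) * q + i 0 * q ^ 0) / q
        = ∑ j ∈ Finset.range B', i (j+1) * q ^ j := by
      simp only [pow_zero, mul_one]
      rw [add_comm, Nat.add_mul_div_right _ _ (by omega : 0 < q)]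
      rw [Nat.div_eq_of_lt (hi 0), zero_add]
    rw [h3]
    exact ih B' (fun j => i (j+1)) (fun j => hi (j+1)) (by omega)


/-- the truncated Legendre-type sum `∑_{i=1}^{B} ⌊m/Q^i⌋`. -/
def Lsum (Q m B : ℕ) : ℕ := ∑ i ∈ Finset.Icc 1 B, m / Q ^ i

/-- the "base-Q repunit" `b_t = 1 + Q + ⋯ + Q^{t-1}`. -/
def bgeo (Q t : ℕ) : ℕ := ∑ s ∈ Finset.range t, Q ^ s

lemma bgeo_ge (Q t : ℕ) (hQ : 1 ≤ Q) : t ≤ bgeo Q t := by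
  calc t = ∑ s ∈ Finset.range t, 1 := by simp
    _ ≤ bgeo Q t := Finset.sum_le_sum fun s _ => Nat.one_le_pow _ _ hQ

lemma Lsum_mono {Q : ℕ} {m m' B : ℕ} (h : m ≤ m') : Lsum Q m B ≤ Lsum Q m' B :=
  Finset.sum_le_sum fun i _ => Nat.div_le_div_right h

lemma Lsum_stable {Q : ℕ} (hQ : 2 ≤ Q) {m B B' : ℕ} (hB : m ≤ B) (hBB' : B ≤ B') :
    Lsum Q m B = Lsum Q m B' := by
  unfold Lsum
  refine Finset.sum_subset (Finset.Icc_subset_Icc_right hBB') ?_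
  intro i hi hni
  rw [Finset.mem_Icc] at hi hni
  have hiB : B < i := by omega
  apply Nat.div_eq_of_lt
  calc m ≤ B := hB
    _ < i := hiB
    _ < 2 ^ i := Nat.lt_two_pow_self (n := i)
    _ ≤ Q ^ i := Nat.pow_le_pow_left hQ i

lemma Lsum_add {Q : ℕ} (hQ : 2 ≤ Q) {c x t B : ℕ} (hc : c < Q) (hx : x < Q ^ t)
    (hB : t ≤ B) :
    Lsum Q (c * Q ^ t + x) B = c * bgeo Q t + Lsum Q x B := by
  unfold Lsum
  have hterm : ∀ i ∈ Finset.Icc 1 B,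
      (c * Q ^ t + x) / Q ^ i = (if i ≤ t then c * Q ^ (t - i) else 0) + x / Q ^ i := by
    intro i hi
    by_cases hit : i ≤ t
    · rw [if_pos hit]
      have hpow : Q ^ t = Q ^ (t - i) * Q ^ i := by rw [← pow_add]; congr 1; omega
      rw [hpow, ← mul_assoc, add_comm, Nat.add_mul_div_right _ _ (Nat.pow_pos (by omega))]
      omega
    · rw [if_neg hit]
      have h1 : c * Q ^ t + x < Q ^ i := by
        calc c * Q ^ t + x < c * Q ^ t + Q ^ t := by omega
          _ = (c + 1) * Q ^ t := by ring
          _ ≤ Q * Q ^ t := Nat.mul_le_mul_right _ (by omega)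
          _ = Q ^ (t + 1) := by rw [pow_succ]; ring
          _ ≤ Q ^ i := Nat.pow_le_pow_right (by omega) (by omega)
      rw [Nat.div_eq_of_lt h1, Nat.div_eq_of_lt (by
        calc x < Q ^ t := hx
          _ ≤ Q ^ i := Nat.pow_le_pow_right (by omega) (by omega))]
  rw [Finset.sum_congr rfl hterm, Finset.sum_add_distrib]
  congr 1
  rw [Finset.sum_ite, Finset.sum_const_zero, add_zero]
  have hfilter : (Finset.Icc 1 B).filter (fun i => i ≤ t) = Finset.Icc 1 t := by
    ext i; simp only [Finset.mem_filter, Finset.mem_Icc]; omega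
  rw [hfilter]
  unfold bgeo
  rw [Finset.mul_sum, ← Finset.sum_range_reflect (fun s => c * Q ^ s) t]
  rw [show Finset.Icc 1 t = Finset.Ico 1 (t + 1) from by rw [Finset.Ico_add_one_right_eq_Icc]]
  rw [Finset.sum_Ico_eq_sum_range]
  rw [show t + 1 - 1 = t from rfl]
  apply Finset.sum_congr rfl
  intro s hs
  rw [Finset.mem_range] at hs
  rw [show t - (1 + s) = t - 1 - s from by omega]

lemma Lsum_digits {Q : ℕ} (hQ : 2 ≤ Q) {C : ℕ → ℕ} (hC : ∀ t, C t < Q) :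
    ∀ (N : ℕ) {B : ℕ}, N ≤ B →
      Lsum Q (∑ t ∈ Finset.range N, C t * Q ^ t) B
        = ∑ t ∈ Finset.range N, C t * bgeo Q t := by
  intro N
  induction N with
  | zero => intro B _; simp [Lsum]
  | succ N ih =>
    intro B hB
    rw [Finset.sum_range_succ, Finset.sum_range_succ, add_comm]
    rw [Lsum_add hQ (hC N) (geom_lt (by omega) hC N) (by omega)]
    rw [ih (by omega)]
    ring

section Rep

variable {Q k : ℕ} {j c : Fin k → ℕ}

/-- base-Q digits of `∑ c i * Q ^ (j i)` -/
def digitC (j c : Fin k → ℕ) (t : ℕ) : ℕ :=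
  ∑ i ∈ Finset.univ.filter (fun i => j i = t), c i

lemma digitC_eq_zero (hj : StrictAnti j) (t : ℕ) (ht : ∀ i, j i ≠ t) :
    digitC j c t = 0 := by
  unfold digitC
  rw [Finset.filter_false_of_mem (fun i _ => ht i), Finset.sum_empty]

lemma digitC_eq (hj : StrictAnti j) (i₀ : Fin k) : digitC j c (j i₀) = c i₀ := by
  unfold digitC
  rw [show Finset.univ.filter (fun i => j i = j i₀) = {i₀} from by
    ext i
    simp only [Finset.mem_filter, Finset.mem_univ, true_and, Finset.mem_singleton]
    exact ⟨fun h => hj.injective h, fun h => h ▸ rfl⟩]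
  simp

lemma digitC_lt (hQ : 2 ≤ Q) (hj : StrictAnti j) (hc : ∀ i, c i < Q) (t : ℕ) :
    digitC j c t < Q := by
  by_cases h : ∃ i, j i = t
  · obtain ⟨i₀, rfl⟩ := h
    rw [digitC_eq hj]
    exact hc i₀
  · push_neg at h
    rw [digitC_eq_zero hj t h]
    omega

lemma digitC_swap (hj : StrictAnti j) (g : ℕ → ℕ) {N : ℕ} (hN : ∀ i, j i < N) :
    ∑ t ∈ Finset.range N, digitC j c t * g t = ∑ i, c i * g (j i) := by
  unfold digitC
  have h1 : ∀ t ∈ Finset.range N,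
      (∑ i ∈ Finset.univ.filter (fun i => j i = t), c i) * g t
        = ∑ i : Fin k, if j i = t then c i * g t else 0 := by
    intro t _
    rw [Finset.sum_mul, Finset.sum_filter]
  rw [Finset.sum_congr rfl h1, Finset.sum_comm]
  apply Finset.sum_congr rfl
  intro i _
  simp [Finset.sum_ite_eq, hN i]

end Rep


local notation "𝕢" => Fintype.card F

lemma two_le_q : 2 ≤ (Fintype.card F) := Fintype.one_lt_card

lemma lt_q_pow (n : ℕ) : n < (𝕢 : ℕ) ^ n :=
  lt_of_lt_of_le (Nat.lt_two_pow_self (n := n)) (Nat.pow_le_pow_left two_le_q n)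

variable (a : Fin (Fintype.card F) ≃ F)

lemma a_zero (h0 : a 0 = 0) {x : ℕ} (h : x < 𝕢) (hx : x = 0) : a ⟨x, h⟩ = 0 := by
  subst hx
  rw [show (⟨0, h⟩ : Fin 𝕢) = 0 from Fin.ext (Fin.val_zero _).symm, h0]

lemma coeff_deltaInv (h0 : a 0 = 0) (m n : ℕ) :
    (deltaInv a m).coeff n = a ⟨m / 𝕢 ^ n % 𝕢, Nat.mod_lt _ Fintype.card_pos⟩ := by
  unfold deltaInv
  rw [Polynomial.finset_sum_coeff]
  simp only [Polynomial.coeff_C_mul, Polynomial.coeff_X_pow, mul_ite, mul_one, mul_zero]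
  by_cases hn : n < m + 1
  · rw [Finset.sum_eq_single n]
    · simp
    · intro b _ hb; simp [Ne.symm hb]
    · intro h; exact absurd (Finset.mem_range.mpr hn) h
  · rw [Finset.sum_eq_zero]
    · have hm : m < 𝕢 ^ n := lt_of_le_of_lt (by omega) (lt_q_pow n)
      exact (a_zero a h0 _ (by rw [Nat.div_eq_of_lt hm, Nat.zero_mod])).symm
    · intro b hb
      have : b ≠ n := by rw [Finset.mem_range] at hb; omega
      simp [Ne.symm this]

lemma natDegree_deltaInv_le (m : ℕ) : (deltaInv a m).natDegree ≤ m := by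
  unfold deltaInv
  refine le_trans (Polynomial.natDegree_sum_le _ _) ?_
  rw [Finset.fold_max_le]
  refine ⟨Nat.zero_le _, fun j hj => le_trans (Polynomial.natDegree_C_mul_le _ _) ?_⟩
  rw [Finset.mem_range] at hj
  simpa [Polynomial.natDegree_X_pow] using by omega

lemma delta_eq_sum (h0 : a 0 = 0) (f : F[X]) {B : ℕ} (hB : f.natDegree + 1 ≤ B) :
    delta a f = ∑ j ∈ Finset.range B, (a.symm (f.coeff j) : ℕ) * 𝕢 ^ j := by
  unfold delta
  refine Finset.sum_subset (Finset.range_subset_range.mpr hB) ?_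
  intro j _ hj
  rw [Finset.mem_range, not_lt] at hj
  rw [Polynomial.coeff_eq_zero_of_natDegree_lt (by omega), ← h0, Equiv.symm_apply_apply]
  simp

lemma delta_deltaInv (h0 : a 0 = 0) (m : ℕ) : delta a (deltaInv a m) = m := by
  rw [delta_eq_sum a h0 _ (by have := natDegree_deltaInv_le a m; omega : (deltaInv a m).natDegree + 1 ≤ m + 1)]
  have : ∀ j, (a.symm ((deltaInv a m).coeff j) : ℕ) = m / 𝕢 ^ j % 𝕢 := by
    intro j
    rw [coeff_deltaInv a h0, Equiv.symm_apply_apply]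
  rw [Finset.sum_congr rfl fun j _ => by rw [this j]]
  have h1 : m < 𝕢 ^ (m + 1) :=
    lt_of_lt_of_le (lt_q_pow m) (Nat.pow_le_pow_right Fintype.card_pos (by omega))
  exact digits_reconstruct two_le_q (m+1) m h1

lemma delta_lt_pow (h0 : a 0 = 0) (f : F[X]) {D : ℕ} (hD : f.natDegree < D) :
    delta a f < 𝕢 ^ D := by
  rw [delta_eq_sum a h0 f (by omega : f.natDegree + 1 ≤ D)]
  exact geom_lt (Q := 𝕢) (C := fun t => (a.symm (f.coeff t) : ℕ))
    (by have := two_le_q (F := F); omega) (fun t => (a.symm (f.coeff t)).isLt) D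

lemma deltaInv_delta (h0 : a 0 = 0) (f : F[X]) : deltaInv a (delta a f) = f := by
  ext n
  rw [coeff_deltaInv a h0]
  by_cases hn : n ≤ f.natDegree
  · have : delta a f / 𝕢 ^ n % 𝕢 = (a.symm (f.coeff n) : ℕ) := by
      unfold delta
      exact digits_extract two_le_q n (f.natDegree + 1)
        (fun j => (a.symm (f.coeff j) : ℕ))
        (fun j => (a.symm (f.coeff j)).isLt) (by omega)
    simp_rw [this]
    simp
  · rw [Polynomial.coeff_eq_zero_of_natDegree_lt (by omega)]
    have h1 : delta a f < 𝕢 ^ n := delta_lt_pow a h0 f (by omega)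
    exact a_zero a h0 _ (by rw [Nat.div_eq_of_lt h1, Nat.zero_mod])

lemma deltaInv_injective (h0 : a 0 = 0) : Function.Injective (deltaInv a) :=
  Function.LeftInverse.injective (delta_deltaInv a h0)

lemma coeff_deltaInv_eq_zero (h0 : a 0 = 0) {m D n : ℕ} (hm : m < 𝕢 ^ D) (hn : D ≤ n) :
    (deltaInv a m).coeff n = 0 := by
  rw [coeff_deltaInv a h0]
  have h1 : m < 𝕢 ^ n := lt_of_lt_of_le hm (Nat.pow_le_pow_right Fintype.card_pos hn)
  exact a_zero a h0 _ (by rw [Nat.div_eq_of_lt h1, Nat.zero_mod])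

lemma degree_deltaInv_lt (h0 : a 0 = 0) {m D : ℕ} (hm : m < 𝕢 ^ D) :
    (deltaInv a m).degree < (D : WithBot ℕ) := by
  rw [Polynomial.degree_lt_iff_coeff_zero]
  intro n hn
  exact coeff_deltaInv_eq_zero a h0 hm (by exact_mod_cast hn)

/-- key structural identity: `deltaInv (u·q^D + r) = X^D · deltaInv u + deltaInv r`. -/
lemma deltaInv_split (h0 : a 0 = 0) (u r D : ℕ) (hr : r < 𝕢 ^ D) :
    deltaInv a (𝕢 ^ D * u + r) = X ^ D * deltaInv a u + deltaInv a r := by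
  ext n
  rw [Polynomial.coeff_add, coeff_deltaInv a h0, coeff_deltaInv a h0]
  rw [mul_comm (X ^ D : F[X]) _, Polynomial.coeff_mul_X_pow']
  by_cases hn : D ≤ n
  · rw [if_pos hn, coeff_deltaInv a h0]
    have h2 : (𝕢 ^ D * u + r) / 𝕢 ^ n = u / 𝕢 ^ (n - D) := by
      have hpow : (𝕢:ℕ) ^ n = 𝕢 ^ D * 𝕢 ^ (n - D) := by
        rw [← pow_add]; congr 1; omega
      rw [hpow, ← Nat.div_div_eq_div_mul]
      rw [Nat.mul_add_div (Nat.pow_pos Fintype.card_pos) u r]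
      rw [Nat.div_eq_of_lt hr, add_zero]
    rw [h2]
    have hz : r / 𝕢 ^ n = 0 :=
      Nat.div_eq_of_lt (lt_of_lt_of_le hr (Nat.pow_le_pow_right Fintype.card_pos hn))
    simp_rw [hz]
    rw [a_zero a h0 _ (Nat.zero_mod _), add_zero]
  · rw [if_neg hn, zero_add]
    push_neg at hn
    congr 1
    apply Fin.ext
    show (𝕢 ^ D * u + r) / 𝕢 ^ n % 𝕢 = r / 𝕢 ^ n % 𝕢
    have hpow : (𝕢:ℕ) ^ D * u = (𝕢 ^ (D - n - 1) * u * 𝕢) * 𝕢 ^ n := by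
      rw [show (𝕢:ℕ) ^ D = 𝕢 ^ (D - n - 1) * 𝕢 * 𝕢 ^ n by rw [← pow_succ, ← pow_add]; congr 1; omega]
      ring
    rw [hpow, add_comm, Nat.add_mul_div_right _ _ (Nat.pow_pos Fintype.card_pos)]
    rw [Nat.add_mul_mod_self_right]


open scoped Classical in
lemma exists_unique_res (h0 : a 0 = 0) {Q' : F[X]} (hQm : Q'.Monic) {D : ℕ}
    (hD : Q'.natDegree = D) (hD1 : 0 < D) (w : F[X]) :
    ∃! r : ℕ, r < 𝕢 ^ D ∧ Q' ∣ w - deltaInv a r := by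
  have hQne : Q' ≠ 0 := hQm.ne_zero
  refine ⟨delta a (w %ₘ Q'), ⟨?_, ?_⟩, ?_⟩
  · apply delta_lt_pow a h0
    rcases eq_or_ne (w %ₘ Q') 0 with h | h
    · rw [h]; simpa using hD1
    · have := Polynomial.natDegree_lt_natDegree h (Polynomial.degree_modByMonic_lt w hQm)
      omega
  · rw [deltaInv_delta a h0]
    refine ⟨w /ₘ Q', ?_⟩
    nth_rewrite 1 [← Polynomial.modByMonic_add_div w Q']
    ring
  · rintro r ⟨hr, hdvd⟩
    have hρ : Q' ∣ w - deltaInv a (delta a (w %ₘ Q')) := by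
      rw [deltaInv_delta a h0]
      refine ⟨w /ₘ Q', ?_⟩
      nth_rewrite 1 [← Polynomial.modByMonic_add_div w Q']
      ring
    have hdiff : Q' ∣ deltaInv a (delta a (w %ₘ Q')) - deltaInv a r := by
      have := dvd_sub hdvd hρ
      simpa using this
    have hdeg : (deltaInv a (delta a (w %ₘ Q')) - deltaInv a r).degree < Q'.degree := by
      rw [Polynomial.degree_eq_natDegree hQne, hD]
      refine lt_of_le_of_lt (Polynomial.degree_sub_le _ _) (max_lt ?_ ?_)
      · exact degree_deltaInv_lt a h0 (delta_lt_pow a h0 _ (by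
          rcases eq_or_ne (w %ₘ Q') 0 with h | h
          · rw [h]; simpa using hD1
          · have := Polynomial.natDegree_lt_natDegree h (Polynomial.degree_modByMonic_lt w hQm)
            omega))
      · exact degree_deltaInv_lt a h0 hr
    have := Polynomial.eq_zero_of_dvd_of_degree_lt hdiff hdeg
    exact (deltaInv_injective a h0 (sub_eq_zero.mp this)).symm

open scoped Classical in
lemma count_dvd (h0 : a 0 = 0) {P : F[X]} (hmon : P.Monic) {d : ℕ} (hd : P.natDegree = d)
    (hd1 : 0 < d) {i : ℕ} (hi : 0 < i) (m : ℕ) :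
    ((Finset.range m).filter (fun m' => P ^ i ∣ deltaInv a m - deltaInv a m')).card
      = m / 𝕢 ^ (d * i) := by
  set D := d * i with hD
  set Dq := 𝕢 ^ D with hDq
  have hDqpos : 0 < Dq := Nat.pow_pos Fintype.card_pos
  set U := m / Dq with hU
  set R := m % Dq with hR
  have hQm : (P ^ i).Monic := hmon.pow i
  have hQD : (P ^ i).natDegree = D := by rw [Polynomial.natDegree_pow, hd, hD]; ring
  have hD1 : 0 < D := Nat.mul_pos hd1 hi
  have key : ∀ u : ℕ, ∃! r : ℕ, r < Dq ∧ P ^ i ∣ (deltaInv a m - X ^ D * deltaInv a u) - deltaInv a r :=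
    fun u => exists_unique_res a h0 hQm hQD hD1 _
  choose ρ hρ using fun u => (key u).exists
  have huniq : ∀ u r, r < Dq → P ^ i ∣ (deltaInv a m - X ^ D * deltaInv a u) - deltaInv a r → r = ρ u :=
    fun u r h1 h2 => (key u).unique ⟨h1, h2⟩ (hρ u)
  have hsplitm : deltaInv a m = X ^ D * deltaInv a U + deltaInv a R := by
    rw [← deltaInv_split a h0 U R D (Nat.mod_lt _ hDqpos), ← hDq]
    rw [Nat.div_add_mod]
  have himg : (Finset.range m).filter (fun m' => P ^ i ∣ deltaInv a m - deltaInv a m')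
      = (Finset.range U).image (fun u => Dq * u + ρ u) := by
    ext m'
    simp only [Finset.mem_filter, Finset.mem_range, Finset.mem_image]
    constructor
    · rintro ⟨hm', hdvd⟩
      have hsplit : deltaInv a m' = X ^ D * deltaInv a (m' / Dq) + deltaInv a (m' % Dq) := by
        rw [← deltaInv_split a h0 _ _ D (Nat.mod_lt _ hDqpos), ← hDq, Nat.div_add_mod]
      have hcond : P ^ i ∣ (deltaInv a m - X ^ D * deltaInv a (m' / Dq)) - deltaInv a (m' % Dq) := by
        have : deltaInv a m - deltaInv a m'
            = (deltaInv a m - X ^ D * deltaInv a (m' / Dq)) - deltaInv a (m' % Dq) := by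
          rw [hsplit]; ring
        rwa [this] at hdvd
      have hrρ : m' % Dq = ρ (m' / Dq) := huniq _ _ (Nat.mod_lt _ hDqpos) hcond
      have hult : m' / Dq < U := by
        rcases lt_or_ge (m' / Dq) U with h | h
        · exact h
        exfalso
        have hle : m' / Dq ≤ U := Nat.div_le_div_right (le_of_lt hm')
        have huU : m' / Dq = U := le_antisymm hle h
        -- then m' % Dq < R and P^i ∣ deltaInv R - deltaInv (m' % Dq)
        have hrR : m' % Dq < R := by
          have h1 : m' = Dq * U + m' % Dq := by rw [← huU, Nat.div_add_mod]
          have h2 : m = Dq * U + R := by rw [hR, hU, Nat.div_add_mod]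
          omega
        have hdvdR : P ^ i ∣ deltaInv a R - deltaInv a (m' % Dq) := by
          have heq : deltaInv a m - deltaInv a m'
              = deltaInv a R - deltaInv a (m' % Dq) := by
            rw [hsplitm, hsplit, huU]; ring
          rwa [heq] at hdvd
        have keyR := exists_unique_res a h0 hQm hQD hD1 (deltaInv a R)
        have e1 : m' % Dq = R :=
          keyR.unique ⟨Nat.mod_lt _ hDqpos, hdvdR⟩
            ⟨by rw [hR]; exact Nat.mod_lt _ hDqpos, by simp⟩
        omega
      exact ⟨m' / Dq, hult, by rw [← hrρ, Nat.div_add_mod]⟩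
    · rintro ⟨u, hu, rfl⟩
      have hρlt := (hρ u).1
      constructor
      · calc Dq * u + ρ u < Dq * u + Dq := by omega
          _ = Dq * (u + 1) := by ring
          _ ≤ Dq * U := Nat.mul_le_mul_left _ (by omega)
          _ ≤ m := by rw [hU]; exact Nat.mul_div_le m Dq
      · have hsplit : deltaInv a (Dq * u + ρ u) = X ^ D * deltaInv a u + deltaInv a (ρ u) := by
          rw [hDq]; exact deltaInv_split a h0 u (ρ u) D hρlt
        have : deltaInv a m - deltaInv a (Dq * u + ρ u)
            = (deltaInv a m - X ^ D * deltaInv a u) - deltaInv a (ρ u) := by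
          rw [hsplit]; ring
        rw [this]
        exact (hρ u).2
  rw [himg, Finset.card_image_of_injOn, Finset.card_range]
  intro u1 _ u2 _ heq
  have heq' : Dq * u1 + ρ u1 = Dq * u2 + ρ u2 := heq
  have h1 : (Dq * u1 + ρ u1) / Dq = u1 := by
    rw [Nat.mul_add_div hDqpos, Nat.div_eq_of_lt (hρ u1).1, add_zero]
  have h2 : (Dq * u2 + ρ u2) / Dq = u2 := by
    rw [Nat.mul_add_div hDqpos, Nat.div_eq_of_lt (hρ u2).1, add_zero]
  rw [← h1, ← h2, heq']


open scoped Classical in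
lemma emult_factor {P : F[X]} (hPirr : Irreducible P) (hmon : P.Monic) {d : ℕ}
    (hd : P.natDegree = d) (hd1 : 0 < d) {x : F[X]} (hx : x ≠ 0) {N : ℕ}
    (hdeg : x.natDegree ≤ N) :
    emultiplicity P x = (∑ i ∈ Finset.Icc 1 N, if P ^ i ∣ x then 1 else 0 : ℕ) := by
  have hdegP : (0 : WithBot ℕ) < P.degree := by
    rw [Polynomial.degree_eq_natDegree hPirr.ne_zero, hd]
    exact_mod_cast hd1
  have hfin : FiniteMultiplicity P x :=
    Polynomial.finiteMultiplicity_of_degree_pos_of_monic hdegP hmon hx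
  set ν := multiplicity P x with hν
  have hdvd_iff : ∀ i : ℕ, P ^ i ∣ x ↔ i ≤ ν := fun i => hfin.pow_dvd_iff_le_multiplicity
  have hνN : ν ≤ N := by
    have h1 : P ^ ν ∣ x := (hdvd_iff ν).mpr le_rfl
    have h2 : (P ^ ν).natDegree ≤ x.natDegree := Polynomial.natDegree_le_of_dvd h1 hx
    rw [Polynomial.natDegree_pow, hd] at h2
    calc ν ≤ ν * d := Nat.le_mul_of_pos_right _ hd1
      _ ≤ N := le_trans h2 hdeg
  have hsum : (∑ i ∈ Finset.Icc 1 N, if P ^ i ∣ x then 1 else 0 : ℕ) = ν := by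
    rw [Finset.sum_congr rfl (fun i _ => by rw [if_congr (hdvd_iff i) rfl rfl])]
    rw [← Finset.card_filter]
    rw [show (Finset.Icc 1 N).filter (fun i => i ≤ ν) = Finset.Icc 1 ν from by
      ext x; simp only [Finset.mem_filter, Finset.mem_Icc]; omega]
    simp [Nat.card_Icc]
  rw [hsum]
  exact hfin.emultiplicity_eq_multiplicity

open scoped Classical in
lemma pfact_dvd_iff (h0 : a 0 = 0) {P : F[X]} (hPirr : Irreducible P) (hmon : P.Monic)
    {d : ℕ} (hd : P.natDegree = d) (hd1 : 0 < d) (m e : ℕ) :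
    P ^ e ∣ pfact a (deltaInv a m) ↔ e ≤ ∑ i ∈ Finset.Icc 1 m, m / 𝕢 ^ (d * i) := by
  have hprime : Prime P := hPirr.prime
  have hpf : pfact a (deltaInv a m)
      = ∏ m' ∈ Finset.range m, (deltaInv a m - deltaInv a m') := by
    unfold pfact
    rw [delta_deltaInv a h0]
  have hfac_ne : ∀ m' ∈ Finset.range m, deltaInv a m - deltaInv a m' ≠ 0 := by
    intro m' hm' h
    rw [Finset.mem_range] at hm'
    exact absurd (deltaInv_injective a h0 (sub_eq_zero.mp h)) (by omega)
  have hdeg : ∀ m' ∈ Finset.range m, (deltaInv a m - deltaInv a m').natDegree ≤ m := by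
    intro m' hm'
    rw [Finset.mem_range] at hm'
    refine le_trans (Polynomial.natDegree_sub_le _ _) (max_le (natDegree_deltaInv_le a m) ?_)
    exact le_trans (natDegree_deltaInv_le a m') (by omega)
  have hemult : emultiplicity P (pfact a (deltaInv a m))
      = ((∑ i ∈ Finset.Icc 1 m, m / 𝕢 ^ (d * i) : ℕ) : ℕ∞) := by
    rw [hpf, Finset.emultiplicity_prod hprime]
    rw [Finset.sum_congr rfl (fun m' hm' =>
      emult_factor hPirr hmon hd hd1 (hfac_ne m' hm') (hdeg m' hm'))]
    rw [← Nat.cast_sum]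
    congr 1
    rw [Finset.sum_comm]
    refine Finset.sum_congr rfl (fun i hi => ?_)
    rw [Finset.mem_Icc] at hi
    rw [← Finset.card_filter]
    exact count_dvd a h0 hmon hd hd1 (by omega : 0 < i) m
  rw [pow_dvd_iff_le_emultiplicity, hemult]
  exact_mod_cast Iff.rfl

end SmarandacheAux

/-- Proposition 3.8: let `f ∈ tA` be nonzero, `d ≥ 1` with `q^d ∣ δ(f)`, and write
`δ(f) = c₁ q^{d j₁} + ⋯ + c_k q^{d j_k}` with `j₁ > ⋯ > j_k > 0` and `1 ≤ cᵢ < q^d`.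
Put `b_j = (q^{dj} - 1)/(q^d - 1)` and `e₀ = c₁ b_{j₁} + ⋯ + c_k b_{j_k}`.  Then for
every irreducible `P` of degree `d` and every `e ∈ [e₀ - (j_k - 1), e₀]`, `S(P^e) = f`. -/
theorem smarandache_inverse (a : Fin (Fintype.card F) ≃ F) (h0 : a 0 = 0) (h1 : a 1 = 1)
    (f : F[X]) (hf : f ≠ 0) (hXf : X ∣ f) (d : ℕ) (hd1 : 1 ≤ d)
    (hdvd : Fintype.card F ^ d ∣ delta a f) (k : ℕ) (hk : 0 < k) (j c : Fin k → ℕ)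
    (hj : StrictAnti j) (hjpos : ∀ i, 0 < j i)
    (hc : ∀ i, 1 ≤ c i ∧ c i < Fintype.card F ^ d)
    (hrep : delta a f = ∑ i, c i * Fintype.card F ^ (d * j i))
    (e₀ : ℕ)
    (he₀ : e₀ = ∑ i, c i * ((Fintype.card F ^ (d * j i) - 1) / (Fintype.card F ^ d - 1)))
    (P : F[X]) (hP : Irreducible P) (hPd : P.natDegree = d)
    (e : ℕ) (he1 : e₀ - (j ⟨k - 1, Nat.sub_lt hk Nat.one_pos⟩ - 1) ≤ e) (he2 : e ≤ e₀) :
    S a (P ^ e) = f := by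
  classical
  have hq2 : 2 ≤ Fintype.card F := Fintype.one_lt_card
  set Q := Fintype.card F ^ d with hQdef
  have hQ2 : 2 ≤ Q := le_trans hq2 (Nat.le_self_pow (by omega) _)
  set il : Fin k := ⟨k - 1, Nat.sub_lt hk Nat.one_pos⟩ with hil
  set i0 : Fin k := ⟨0, hk⟩ with hi0
  set jl := j il with hjl
  set j0 := j i0 with hj0
  have hj_le : ∀ i, j i ≤ j0 := fun i =>
    hj.antitone (by rw [hi0, Fin.le_def]; exact Nat.zero_le _)
  have hilval : (il : ℕ) = k - 1 := rfl
  have hjl_le : ∀ i, jl ≤ j i := fun i =>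
    hj.antitone (by rw [Fin.le_def, hilval]; have := i.isLt; omega)
  set m := delta a f with hm
  have hpowmul : ∀ t, Fintype.card F ^ (d * t) = Q ^ t := fun t => by
    rw [hQdef, ← pow_mul]
  have hrep' : m = ∑ i, c i * Q ^ (j i) := by
    rw [hrep]
    exact Finset.sum_congr rfl fun i _ => by rw [hpowmul]
  have he₀' : e₀ = ∑ i, c i * SmarandacheAux.bgeo Q (j i) := by
    rw [he₀]
    refine Finset.sum_congr rfl fun i _ => ?_
    rw [hpowmul, hQdef]
    rw [SmarandacheAux.geom_div hQ2]
    rfl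
  set N := j0 + 1 with hN
  set C1 : ℕ → ℕ := SmarandacheAux.digitC j c with hC1
  have hC1lt : ∀ t, C1 t < Q := SmarandacheAux.digitC_lt hQ2 hj (fun i => (hc i).2)
  have hjN : ∀ i, j i < N := fun i => by have := hj_le i; omega
  have hm_digit : m = ∑ t ∈ Finset.range N, C1 t * Q ^ t := by
    rw [hrep', SmarandacheAux.digitC_swap hj (fun t => Q ^ t) hjN]
  have he0_digit : ∑ t ∈ Finset.range N, C1 t * SmarandacheAux.bgeo Q t = e₀ := by
    rw [he₀', SmarandacheAux.digitC_swap hj (fun t => SmarandacheAux.bgeo Q t) hjN]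
  set cl := c il with hcl
  have hcl1 : 1 ≤ cl := (hc il).1
  have hclQ : cl < Q := (hc il).2
  set C2 : ℕ → ℕ := fun t => if t < jl then Q - 1 else if t = jl then cl - 1 else C1 t with hC2
  have hC2lt : ∀ t, C2 t < Q := by
    intro t
    rw [hC2]
    dsimp only
    split
    · omega
    split
    · omega
    · exact hC1lt t
  have hjl1 : 1 ≤ jl := hjpos il
  have hjlN : jl < N := by have := hj_le il; omega
  have hC1low : ∀ t, t < jl → C1 t = 0 := fun t ht =>
    SmarandacheAux.digitC_eq_zero hj t (fun i h => by have := hjl_le i; omega)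
  have hC1jl : C1 jl = cl := SmarandacheAux.digitC_eq hj il
  have hsplitN : ∀ g : ℕ → ℕ, ∑ t ∈ Finset.range N, g t
      = (∑ t ∈ Finset.range jl, g t) + g jl + ∑ t ∈ Finset.Ico (jl+1) N, g t := by
    intro g
    rw [Finset.range_eq_Ico,
      ← Finset.sum_Ico_consecutive g (Nat.zero_le (jl+1)) (by omega : jl + 1 ≤ N)]
    rw [← Finset.range_eq_Ico, Finset.sum_range_succ]
  have hC2tail : ∀ t ∈ Finset.Ico (jl+1) N, C2 t = C1 t := by
    intro t ht
    rw [Finset.mem_Ico] at ht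
    rw [hC2]
    dsimp only
    rw [if_neg (by omega), if_neg (by omega)]
  have hC2jl : C2 jl = cl - 1 := by
    rw [hC2]; dsimp only; rw [if_neg (by omega), if_pos rfl]
  have hC2low : ∀ t, t < jl → C2 t = Q - 1 := by
    intro t ht; rw [hC2]; dsimp only; rw [if_pos ht]
  have hgeojl : (∑ s ∈ Finset.range jl, Q ^ s) * (Q - 1) = Q ^ jl - 1 :=
    SmarandacheAux.geom_mul Q jl (by omega)
  have hbgeo_ge : jl ≤ SmarandacheAux.bgeo Q jl := SmarandacheAux.bgeo_ge Q jl (by omega)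
  have hQjl1 : 1 ≤ Q ^ jl := Nat.one_le_pow _ _ (by omega)
  -- digit expansion of m - 1
  have hml : (∑ t ∈ Finset.range N, C2 t * Q ^ t) + 1 = m := by
    have htail_eq : ∑ t ∈ Finset.Ico (jl+1) N, C2 t * Q ^ t
        = ∑ t ∈ Finset.Ico (jl+1) N, C1 t * Q ^ t :=
      Finset.sum_congr rfl fun t ht => by rw [hC2tail t ht]
    have hlow2 : ∑ t ∈ Finset.range jl, C2 t * Q ^ t = Q ^ jl - 1 := by
      rw [show ∑ t ∈ Finset.range jl, C2 t * Q ^ t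
          = ∑ t ∈ Finset.range jl, (Q - 1) * Q ^ t from
        Finset.sum_congr rfl fun t ht => by rw [hC2low t (Finset.mem_range.mp ht)]]
      rw [← hgeojl, Finset.sum_mul]
      exact Finset.sum_congr rfl fun t _ => by ring
    have hlow1 : ∑ t ∈ Finset.range jl, C1 t * Q ^ t = 0 :=
      Finset.sum_eq_zero fun t ht => by rw [hC1low t (Finset.mem_range.mp ht), zero_mul]
    rw [hsplitN (fun t => C2 t * Q ^ t), htail_eq, hlow2, hC2jl]
    conv_rhs => rw [hm_digit, hsplitN (fun t => C1 t * Q ^ t)]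
    rw [hlow1, hC1jl]
    have h1 : (cl - 1) * Q ^ jl = cl * Q ^ jl - Q ^ jl := by rw [Nat.sub_one_mul]
    have h2 : Q ^ jl ≤ cl * Q ^ jl := Nat.le_mul_of_pos_left _ (by omega)
    omega
  have hmlb : (∑ t ∈ Finset.range N, C2 t * SmarandacheAux.bgeo Q t) + jl = e₀ := by
    have htail_eq : ∑ t ∈ Finset.Ico (jl+1) N, C2 t * SmarandacheAux.bgeo Q t
        = ∑ t ∈ Finset.Ico (jl+1) N, C1 t * SmarandacheAux.bgeo Q t :=
      Finset.sum_congr rfl fun t ht => by rw [hC2tail t ht]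
    have hlow2 : ∑ t ∈ Finset.range jl, C2 t * SmarandacheAux.bgeo Q t
        = SmarandacheAux.bgeo Q jl - jl := by
      rw [show ∑ t ∈ Finset.range jl, C2 t * SmarandacheAux.bgeo Q t
          = ∑ t ∈ Finset.range jl, (Q ^ t - 1) from
        Finset.sum_congr rfl fun t ht => by
          rw [hC2low t (Finset.mem_range.mp ht), mul_comm]
          exact SmarandacheAux.geom_mul Q t (by omega)]
      have h3 : ∑ t ∈ Finset.range jl, ((Q ^ t - 1) + 1) = SmarandacheAux.bgeo Q jl :=
        Finset.sum_congr rfl fun t _ => by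
          have : 1 ≤ Q ^ t := Nat.one_le_pow _ _ (by omega)
          omega
      rw [Finset.sum_add_distrib, Finset.sum_const, Finset.card_range] at h3
      simp only [smul_eq_mul, mul_one] at h3
      omega
    have hlow1 : ∑ t ∈ Finset.range jl, C1 t * SmarandacheAux.bgeo Q t = 0 :=
      Finset.sum_eq_zero fun t ht => by rw [hC1low t (Finset.mem_range.mp ht), zero_mul]
    rw [hsplitN (fun t => C2 t * SmarandacheAux.bgeo Q t), htail_eq, hlow2, hC2jl]
    conv_rhs => rw [← he0_digit, hsplitN (fun t => C1 t * SmarandacheAux.bgeo Q t)]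
    rw [hlow1, hC1jl]
    have h1 : (cl - 1) * SmarandacheAux.bgeo Q jl
        = cl * SmarandacheAux.bgeo Q jl - SmarandacheAux.bgeo Q jl := by rw [Nat.sub_one_mul]
    have h2 : SmarandacheAux.bgeo Q jl ≤ cl * SmarandacheAux.bgeo Q jl :=
      Nat.le_mul_of_pos_left _ (by omega)
    omega
  -- size bounds
  have hmQ : Q ^ j0 ≤ m := by
    have hsingle : c i0 * Q ^ (j i0) ≤ m := by
      rw [hrep']
      exact Finset.single_le_sum (f := fun i => c i * Q ^ (j i))
        (fun i _ => Nat.zero_le _) (Finset.mem_univ i0)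
    calc Q ^ j0 ≤ c i0 * Q ^ j0 := Nat.le_mul_of_pos_left _ (hc i0).1
      _ ≤ m := hsingle
  have hNm : N ≤ m := by
    have h1 : j0 < 2 ^ j0 := Nat.lt_two_pow_self (n := j0)
    have h2 : (2:ℕ) ^ j0 ≤ Q ^ j0 := Nat.pow_le_pow_left hQ2 j0
    omega
  have he₀jl : jl ≤ e₀ := by
    have hsingle : cl * SmarandacheAux.bgeo Q (j il) ≤ e₀ := by
      rw [he₀']
      exact Finset.single_le_sum (f := fun i => c i * SmarandacheAux.bgeo Q (j i))
        (fun i _ => Nat.zero_le _) (Finset.mem_univ il)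
    calc jl ≤ SmarandacheAux.bgeo Q jl := hbgeo_ge
      _ ≤ cl * SmarandacheAux.bgeo Q jl := Nat.le_mul_of_pos_left _ (by omega)
      _ ≤ e₀ := hsingle
  -- Legendre sums
  have hLm : SmarandacheAux.Lsum Q m m = e₀ := by
    rw [show SmarandacheAux.Lsum Q m m
        = SmarandacheAux.Lsum Q (∑ t ∈ Finset.range N, C1 t * Q ^ t) m from by rw [← hm_digit]]
    rw [SmarandacheAux.Lsum_digits hQ2 hC1lt N hNm, he0_digit]
  have hLm1 : SmarandacheAux.Lsum Q (m - 1) m + jl = e₀ := by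
    rw [show m - 1 = ∑ t ∈ Finset.range N, C2 t * Q ^ t from by omega]
    rw [SmarandacheAux.Lsum_digits hQ2 hC2lt N (le_trans hNm (by omega))]
    exact hmlb
  -- normalized P
  set Pn := normalize P with hPn
  have hPne : P ≠ 0 := hP.ne_zero
  have hPnmon : Pn.Monic := Polynomial.monic_normalize hPne
  have hPnirr : Irreducible Pn := by
    exact (associated_normalize P).irreducible hP
  have hPnd : Pn.natDegree = d := by
    rw [hPn, ← hPd]
    exact Polynomial.natDegree_eq_of_degree_eq (Polynomial.degree_normalize)
  have hassoc : ∀ x : F[X], (P ^ e ∣ x ↔ Pn ^ e ∣ x) :=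
    fun x => Associated.dvd_iff_dvd_left ((associated_normalize P).pow_pow (n := e))
  -- the divisibility criterion
  have hiff : ∀ m' : ℕ, P ^ e ∣ pfact a (deltaInv a m') ↔ e ≤ SmarandacheAux.Lsum Q m' m' := by
    intro m'
    rw [hassoc]
    rw [SmarandacheAux.pfact_dvd_iff a h0 hPnirr hPnmon hPnd (by omega) m' e]
    constructor <;> intro h <;> [skip; skip] <;>
      · have heq : (∑ i ∈ Finset.Icc 1 m', m' / Fintype.card F ^ (d * i))
            = SmarandacheAux.Lsum Q m' m' := by
          refine Finset.sum_congr rfl fun i _ => ?_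
          rw [hpowmul]
        omega
  -- the set and its infimum
  have hmem : m ∈ {m' : ℕ | P ^ e ∣ pfact a (deltaInv a m')} := by
    rw [Set.mem_setOf_eq, hiff, hLm]
    exact he2
  have hnot : ∀ m' : ℕ, m' < m → m' ∉ {m' : ℕ | P ^ e ∣ pfact a (deltaInv a m')} := by
    intro m' hm' hmem'
    rw [Set.mem_setOf_eq, hiff] at hmem'
    have h1 : SmarandacheAux.Lsum Q m' m' = SmarandacheAux.Lsum Q m' m :=
      SmarandacheAux.Lsum_stable hQ2 (le_refl m') (by omega)
    have h2 : SmarandacheAux.Lsum Q m' m ≤ SmarandacheAux.Lsum Q (m - 1) m :=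
      SmarandacheAux.Lsum_mono (by omega)
    omega
  have hsInf : sInf {m' : ℕ | P ^ e ∣ pfact a (deltaInv a m')} = m := by
    have hne : {m' : ℕ | P ^ e ∣ pfact a (deltaInv a m')}.Nonempty := ⟨m, hmem⟩
    have h1 := Nat.sInf_mem hne
    have h2 := Nat.sInf_le hmem
    rcases lt_or_eq_of_le h2 with h | h
    · exact absurd h1 (hnot _ h)
    · exact h
  unfold S
  rw [if_neg (pow_ne_zero e hPne), hsInf, hm, SmarandacheAux.deltaInv_delta a h0]
end
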